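/- arXiv:1011.6584 — 5 statements merged into one kernel-verified Lean document; each statement's English description precedes it below -/
import Mathlib

section
/- Let H be an infinite-dimensional separable complex Hilbert space and let A be a bounded linear operator on H belonging to the class C₊(H). Then: (i) A is a complex symmetric operator with a simple spectrum; and (ii) there exist a conjugation J on H with JAJ = A* and a cyclic vector x₀ of A with Jx₀ = x₀ such that Γ(x₀, Ax₀, …, Aⁿx₀, (A*)ⁿx₀) = 0 for every n ≥ 1. -/
open scoped ComplexConjugate

noncomputable section

variable {H : Type*} [NormedAddCommGroup H] [InnerProductSpace ℂ H]

/-- A conjugation on a complex Hilbert space `H`: an antilinear involution that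
reverses the inner product (Mathlib's inner product is linear in the second argument,
so the paper's `(Jx, Jy) = (y, x)` becomes `⟪Jx, Jy⟫ = ⟪y, x⟫`). -/
def IsConjugation (J : H → H) : Prop :=
  (∀ x y : H, J (x + y) = J x + J y) ∧
  (∀ (c : ℂ) (x : H), J (c • x) = conj c • J x) ∧
  (∀ x : H, J (J x) = x) ∧
  (∀ x y : H, (inner ℂ (J x) (J y) : ℂ) = inner ℂ y x)

/-- `x₀` is a cyclic vector for `A`: the span of the orbit `{Aᵏx₀}` is dense. -/
def IsCyclicVector (A : H →L[ℂ] H) (x₀ : H) : Prop :=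
  Dense ((Submodule.span ℂ (Set.range fun k : ℕ => (A ^ k) x₀) : Submodule ℂ H) : Set H)

/-- The Gram determinant `Γ(y₀,…,y_{n-1}) = det((y_k, y_l))`, where the paper's
inner product `(y_k, y_l)` (linear in the first argument) is `⟪y_l, y_k⟫` in Mathlib. -/
def gramDet {n : ℕ} (y : Fin n → H) : ℂ :=
  Matrix.det (Matrix.of fun k l : Fin n => (inner ℂ (y l) (y k) : ℂ))

/-- The condition `Γ(x₀, Ax₀, …, Aⁿx₀, (A*)ⁿx₀) = 0` for every `n ≥ 1`. -/
def GammaVanish [CompleteSpace H] (A : H →L[ℂ] H) (x₀ : H) : Prop :=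
  ∀ n : ℕ, 1 ≤ n →
    gramDet (Fin.snoc (fun i : Fin (n + 1) => (A ^ (i : ℕ)) x₀)
      ((ContinuousLinearMap.adjoint A ^ n) x₀)) = 0

/-- The class `M₃⁺` of semi-infinite complex matrices. -/
def MemM3plus (m : ℕ → ℕ → ℂ) : Prop :=
  (∀ k l : ℕ, 1 < |(k : ℤ) - (l : ℤ)| → m k l = 0) ∧
  (∀ k l : ℕ, m k l = m l k) ∧
  (∀ k : ℕ, m k (k + 1) ≠ 0)

/-- The class `M₃⁻` of semi-infinite complex matrices. -/
def MemM3minus (m : ℕ → ℕ → ℂ) : Prop :=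
  (∀ k l : ℕ, 1 < |(k : ℤ) - (l : ℤ)| → m k l = 0) ∧
  (∀ k l : ℕ, m k l = - m l k) ∧
  (∀ k : ℕ, m k (k + 1) ≠ 0)

/-- The matrix of `A` in the orthonormal basis `e`: the paper's
`m_{k,l} = (Ae_l, e_k)` is `⟪e_k, Ae_l⟫` in Mathlib's convention. -/
def matrixIn (A : H →L[ℂ] H) (e : HilbertBasis ℕ ℂ H) : ℕ → ℕ → ℂ :=
  fun k l => (inner ℂ (e k) (A (e l)) : ℂ)

/-- The class `C₊(H)`. -/
def MemCplus (A : H →L[ℂ] H) : Prop :=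
  ∃ e : HilbertBasis ℕ ℂ H, MemM3plus (matrixIn A e)

/-- The class `C₋(H)`. -/
def MemCminus (A : H →L[ℂ] H) : Prop :=
  ∃ e : HilbertBasis ℕ ℂ H, MemM3minus (matrixIn A e)

/-! In the basis `e` in which `A` is tridiagonal, conjugating coordinates gives a conjugation `J`
with `J e_k = e_k`, and `JAJ = A*` because the matrix of `A` is symmetric. Both `A` and `A*` are
upper Hessenberg in `e`, so `Aⁿ e₀` and `A*ⁿ e₀` lie in `span (e₀, …, eₙ)`; the coefficient of
`eₙ` in `Aⁿ e₀` is the product of the nonzero subdiagonal entries, so `e₀` is cyclic, and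
`e₀, …, Aⁿ e₀, A*ⁿ e₀` are `n + 2` vectors in an `(n + 1)`-dimensional space, whence their Gram
determinant vanishes. -/

open scoped InnerProductSpace InnerProduct

section General

variable {𝕜 E : Type*} [RCLike 𝕜] [NormedAddCommGroup E] [InnerProductSpace 𝕜 E]

theorem not_linearIndependent_of_forall_mem_span {m : ℕ} {s : Finset E} {y : Fin m → E}
    (hy : ∀ i, y i ∈ Submodule.span 𝕜 (s : Set E)) (hs : s.card < m) :
    ¬ LinearIndependent 𝕜 y := by
  intro hli
  have hcard := linearIndependent_le_span' y hli (s : Set E) (Set.range_subset_iff.mpr hy)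
  simp only [Cardinal.mk_fintype, Fintype.card_fin, Finset.coe_sort_coe, Fintype.card_coe,
    Nat.cast_le] at hcard
  omega

namespace HilbertBasis

section

variable {ι : Type*} (e : HilbertBasis ι 𝕜 E)

theorem ext_inner {x y : E} (h : ∀ i, ⟪e i, x⟫_𝕜 = ⟪e i, y⟫_𝕜) : x = y :=
  e.repr.injective <| lp.ext <| funext fun i => by simpa only [e.repr_apply_apply] using h i

theorem eq_sum_of_inner_eq_zero {s : Finset ι} {v : E} (hv : ∀ i ∉ s, ⟪e i, v⟫_𝕜 = 0) :
    v = ∑ i ∈ s, ⟪e i, v⟫_𝕜 • e i := by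
  refine (e.hasSum_repr v).unique ?_
  simp only [e.repr_apply_apply]
  exact hasSum_sum_of_ne_finset_zero fun i hi => by rw [hv i hi, zero_smul]

theorem mem_span_image_iff {s : Finset ι} {v : E} :
    v ∈ Submodule.span 𝕜 (e '' s) ↔ ∀ i ∉ s, ⟪e i, v⟫_𝕜 = 0 := by
  refine ⟨fun hv i hi => ?_, fun hv => ?_⟩
  · have hle : Submodule.span 𝕜 (e '' s) ≤ LinearMap.ker (innerₛₗ 𝕜 (e i)) := by
      rw [Submodule.span_le]
      rintro _ ⟨j, hj, rfl⟩
      exact e.orthonormal.2 (ne_of_mem_of_not_mem hj hi).symm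
    exact hle hv
  · rw [e.eq_sum_of_inner_eq_zero hv]
    exact Submodule.sum_mem _ fun i hi =>
      Submodule.smul_mem _ _ (Submodule.subset_span ⟨i, hi, rfl⟩)

end

variable (e : HilbertBasis ℕ 𝕜 E)

def IsUpperHessenberg (B : E →L[𝕜] E) : Prop :=
  ∀ k l, l + 1 < k → ⟪e k, B (e l)⟫_𝕜 = 0

def spanRange (n : ℕ) : Submodule 𝕜 E :=
  Submodule.span 𝕜 (e '' (Finset.range n : Set ℕ))

theorem mem_spanRange_iff {n : ℕ} {v : E} : v ∈ e.spanRange n ↔ ∀ k, n ≤ k → ⟪e k, v⟫_𝕜 = 0 := by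
  simp only [spanRange, e.mem_span_image_iff, Finset.mem_range, not_lt]

theorem apply_mem_spanRange_succ {B : E →L[𝕜] E} (hB : e.IsUpperHessenberg B)
    {n : ℕ} {v : E} (hv : v ∈ e.spanRange n) : B v ∈ e.spanRange (n + 1) := by
  suffices e.spanRange n ≤ (e.spanRange (n + 1)).comap (B : E →ₗ[𝕜] E) from this hv
  rw [spanRange, Submodule.span_le]
  rintro _ ⟨l, hl, rfl⟩
  exact e.mem_spanRange_iff.mpr fun k hk => hB k l (by simp at hl; omega)

theorem pow_apply_mem_spanRange {B : E →L[𝕜] E}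
    (hB : e.IsUpperHessenberg B) (n : ℕ) :
    (B ^ n) (e 0) ∈ e.spanRange (n + 1) := by
  induction n with
  | zero => exact Submodule.subset_span ⟨0, by simp, rfl⟩
  | succ n ih =>
    rw [pow_succ', mul_apply_eq_comp]
    exact e.apply_mem_spanRange_succ hB ih

theorem inner_succ_apply_of_mem_spanRange {B : E →L[𝕜] E}
    (hB : e.IsUpperHessenberg B) {n : ℕ} {v : E}
    (hv : v ∈ e.spanRange (n + 1)) :
    ⟪e (n + 1), B v⟫_𝕜 = ⟪e (n + 1), B (e n)⟫_𝕜 * ⟪e n, v⟫_𝕜 := by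
  have hsum := e.eq_sum_of_inner_eq_zero (s := Finset.range (n + 1)) fun k hk =>
    e.mem_spanRange_iff.mp hv k (by simpa using hk)
  have hlow : ∀ l ∈ Finset.range n, ⟪e (n + 1), B (⟪e l, v⟫_𝕜 • e l)⟫_𝕜 = 0 := fun l hl => by
    rw [map_smul, inner_smul_right, hB _ _ (by simp at hl; omega), mul_zero]
  nth_rw 1 [hsum]
  rw [map_sum, inner_sum, Finset.sum_range_succ, Finset.sum_eq_zero hlow, zero_add,
    map_smul, inner_smul_right, mul_comm]

theorem inner_pow_apply_eq_prod {B : E →L[𝕜] E}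
    (hB : e.IsUpperHessenberg B) (n : ℕ) :
    ⟪e n, (B ^ n) (e 0)⟫_𝕜 = ∏ k ∈ Finset.range n, ⟪e (k + 1), B (e k)⟫_𝕜 := by
  induction n with
  | zero =>
    rw [pow_zero, Finset.prod_range_zero, one_apply_eq_self,
      inner_self_eq_one_of_norm_eq_one (e.orthonormal.1 0)]
  | succ n ih =>
    rw [pow_succ', mul_apply_eq_comp,
      e.inner_succ_apply_of_mem_spanRange hB (e.pow_apply_mem_spanRange hB n), ih,
      Finset.prod_range_succ, mul_comm]

theorem pow_apply_sub_inner_smul_mem_spanRange {B : E →L[𝕜] E} (hB : e.IsUpperHessenberg B)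
    (n : ℕ) : (B ^ n) (e 0) - ⟪e n, (B ^ n) (e 0)⟫_𝕜 • e n ∈ e.spanRange n := by
  refine e.mem_spanRange_iff.mpr fun k hk => ?_
  rcases hk.eq_or_lt with rfl | hlt
  · rw [inner_sub_right, inner_smul_right, inner_self_eq_one_of_norm_eq_one
      (e.orthonormal.1 _), mul_one, sub_self]
  · rw [inner_sub_right, inner_smul_right, e.orthonormal.2 hlt.ne',
      e.mem_spanRange_iff.mp (e.pow_apply_mem_spanRange hB n) k hlt, mul_zero, sub_zero]

theorem dense_span_pow_apply {B : E →L[𝕜] E}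
    (hB : e.IsUpperHessenberg B) (hsub : ∀ n, ⟪e (n + 1), B (e n)⟫_𝕜 ≠ 0) :
    Dense (Submodule.span 𝕜 (Set.range fun k => (B ^ k) (e 0)) : Set E) := by
  set S := Submodule.span 𝕜 (Set.range fun k => (B ^ k) (e 0))
  have hspan : ∀ n, e.spanRange n ≤ S := by
    intro n
    induction n with
    | zero => simp [spanRange]
    | succ n ih =>
      have hc : ⟪e n, (B ^ n) (e 0)⟫_𝕜 ≠ 0 := by
        rw [e.inner_pow_apply_eq_prod hB, Finset.prod_ne_zero_iff]
        exact fun k _ => hsub k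
      set c := ⟪e n, (B ^ n) (e 0)⟫_𝕜
      have hen : e n ∈ S := by
        have hmem : c • e n ∈ S :=
          (sub_sub_cancel ((B ^ n) (e 0)) (c • e n)) ▸
            S.sub_mem (Submodule.subset_span ⟨n, rfl⟩)
              (ih (e.pow_apply_sub_inner_smul_mem_spanRange hB n))
        exact (S.smul_mem_iff hc).mp hmem
      rw [spanRange, Submodule.span_le]
      rintro _ ⟨l, hl, rfl⟩
      rcases (Finset.mem_range_succ_iff.mp hl).lt_or_eq with hlt | rfl
      · exact ih (Submodule.subset_span ⟨l, by simpa using hlt, rfl⟩)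
      · exact hen
  have hle : Submodule.span 𝕜 (Set.range e) ≤ S := Submodule.span_le.mpr <| by
    rintro _ ⟨n, rfl⟩
    exact hspan (n + 1) (Submodule.subset_span ⟨n, by simp, rfl⟩)
  rw [Submodule.dense_iff_topologicalClosure_eq_top]
  exact top_unique (e.dense_span ▸ Submodule.topologicalClosure_mono hle)

end HilbertBasis

end General

namespace HilbertBasis

variable {ι : Type*} (e : HilbertBasis ι ℂ H)

def conjugation (x : H) : H :=
  e.repr.symm (star (e.repr x))

theorem inner_conjugation (i : ι) (x : H) : ⟪e i, e.conjugation x⟫_ℂ = conj ⟪e i, x⟫_ℂ := by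
  rw [← e.repr_apply_apply, conjugation, LinearIsometryEquiv.apply_symm_apply, lp.star_apply,
    e.repr_apply_apply]
  rfl

theorem conjugation_apply_self (i : ι) : e.conjugation (e i) = e i := by
  classical
  refine e.ext_inner fun j => ?_
  rw [inner_conjugation, orthonormal_iff_ite.mp e.orthonormal]
  split_ifs <;> simp

theorem isConjugation_conjugation : IsConjugation e.conjugation := by
  refine ⟨fun x y => ?_, fun c x => ?_, fun x => ?_, fun x y => ?_⟩
  · simp only [conjugation, map_add, star_add]
  · simp only [conjugation, map_smul, star_smul, RCLike.star_def]
  · simp only [conjugation, LinearIsometryEquiv.apply_symm_apply, star_star,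
      LinearIsometryEquiv.symm_apply_apply]
  · rw [← e.tsum_inner_mul_inner, ← e.tsum_inner_mul_inner y x]
    refine tsum_congr fun i => ?_
    rw [← inner_conj_symm (e.conjugation x), inner_conjugation, inner_conjugation,
      ← inner_conj_symm y, RCLike.conj_conj, mul_comm]

variable [CompleteSpace H]

theorem conjugation_apply_conjugation_eq_adjoint {A : H →L[ℂ] H}
    (hA : ∀ i j, ⟪e i, A (e j)⟫_ℂ = ⟪e j, A (e i)⟫_ℂ) (x : H) :
    e.conjugation (A (e.conjugation x)) = (A†) x := by
  have hJ := e.isConjugation_conjugation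
  have hcol : ∀ i, (A†) (e i) = e.conjugation (A (e i)) := fun i => e.ext_inner fun j => by
    rw [inner_conjugation, ContinuousLinearMap.adjoint_inner_right, hA, inner_conj_symm]
  refine e.ext_inner fun i => ?_
  calc ⟪e i, e.conjugation (A (e.conjugation x))⟫_ℂ
      = ⟪e.conjugation (e i), e.conjugation (A (e.conjugation x))⟫_ℂ := by
        rw [conjugation_apply_self]
    _ = ⟪e.conjugation x, (A†) (e i)⟫_ℂ := by
        rw [hJ.2.2.2, ContinuousLinearMap.adjoint_inner_right]
    _ = ⟪e i, (A†) x⟫_ℂ := by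
        rw [hcol, hJ.2.2.2, ContinuousLinearMap.adjoint_inner_right]

end HilbertBasis

theorem gramDet_eq_zero_iff {n : ℕ} (y : Fin n → H) : gramDet y = 0 ↔ ¬ LinearIndependent ℂ y := by
  rw [← Matrix.det_gram_ne_zero_iff_linearIndependent, not_not, gramDet, ← Matrix.det_transpose]
  rfl

theorem HilbertBasis.gammaVanish [CompleteSpace H] (e : HilbertBasis ℕ ℂ H) {A : H →L[ℂ] H}
    (hA : e.IsUpperHessenberg A) (hA' : e.IsUpperHessenberg (A†)) :
    GammaVanish A (e 0) := by
  classical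
  intro n _
  rw [gramDet_eq_zero_iff]
  refine not_linearIndependent_of_forall_mem_span (s := (Finset.range (n + 1)).image e)
    (fun i => ?_) (Finset.card_image_le.trans_lt (by simp))
  rw [Finset.coe_image, ← HilbertBasis.spanRange]
  refine Fin.lastCases ?_ (fun j => ?_) i
  · rw [Fin.snoc_last]
    exact e.pow_apply_mem_spanRange hA' n
  · rw [Fin.snoc_castSucc]
    exact e.mem_spanRange_iff.mpr fun k hk =>
      e.mem_spanRange_iff.mp (e.pow_apply_mem_spanRange hA j) k (by omega)

theorem MemM3plus.eq_zero_of_succ_lt {m : ℕ → ℕ → ℂ} (hm : MemM3plus m) {k l : ℕ}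
    (h : l + 1 < k) : m k l = 0 :=
  hm.1 k l (by rw [abs_of_pos (by omega)]; omega)

theorem statement0_general {H : Type*} [NormedAddCommGroup H] [InnerProductSpace ℂ H]
    [CompleteSpace H]
    (A : H →L[ℂ] H) (hA : MemCplus A) :
    ((∃ J : H → H, IsConjugation J ∧
        ∀ x : H, J (A (J x)) = ContinuousLinearMap.adjoint A x) ∧
      (∃ x₀ : H, IsCyclicVector A x₀)) ∧
    (∃ (J : H → H) (x₀ : H), IsConjugation J ∧
      (∀ x : H, J (A (J x)) = ContinuousLinearMap.adjoint A x) ∧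
      IsCyclicVector A x₀ ∧ J x₀ = x₀ ∧ GammaVanish A x₀) := by
  obtain ⟨e, hm⟩ := hA
  have hsymm : ∀ k l, ⟪e k, A (e l)⟫_ℂ = ⟪e l, A (e k)⟫_ℂ := hm.2.1
  have hlower : e.IsUpperHessenberg A := fun k l h => hm.eq_zero_of_succ_lt h
  have hlower' : e.IsUpperHessenberg (A†) := fun k l h => by
    rw [ContinuousLinearMap.adjoint_inner_right, ← inner_conj_symm, ← hsymm,
      hlower k l h, map_zero]
  have hsub : ∀ n, ⟪e (n + 1), A (e n)⟫_ℂ ≠ 0 := fun n => hsymm n (n + 1) ▸ hm.2.2 n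
  have hJ := e.isConjugation_conjugation
  have hJA := e.conjugation_apply_conjugation_eq_adjoint hsymm
  have hcyc : IsCyclicVector A (e 0) := e.dense_span_pow_apply hlower hsub
  exact ⟨⟨⟨_, hJ, hJA⟩, ⟨_, hcyc⟩⟩, _, _, hJ, hJA, hcyc, e.conjugation_apply_self 0,
    e.gammaVanish hlower hlower'⟩

/-- If `A ∈ C₊(H)` then `A` is complex symmetric with a simple spectrum,
and there are a conjugation `J` with `JAJ = A*` and a cyclic vector `x₀` with `Jx₀ = x₀`
such that `Γ(x₀, Ax₀, …, Aⁿx₀, (A*)ⁿx₀) = 0` for all `n ≥ 1`. -/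
theorem statement0 {H : Type*} [NormedAddCommGroup H] [InnerProductSpace ℂ H]
    [CompleteSpace H] [TopologicalSpace.SeparableSpace H]
    (hinf : ¬ FiniteDimensional ℂ H)
    (A : H →L[ℂ] H) (hA : MemCplus A) :
    ((∃ J : H → H, IsConjugation J ∧
        ∀ x : H, J (A (J x)) = ContinuousLinearMap.adjoint A x) ∧
      (∃ x₀ : H, IsCyclicVector A x₀)) ∧
    (∃ (J : H → H) (x₀ : H), IsConjugation J ∧
      (∀ x : H, J (A (J x)) = ContinuousLinearMap.adjoint A x) ∧
      IsCyclicVector A x₀ ∧ J x₀ = x₀ ∧ GammaVanish A x₀) :=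
  statement0_general A hA
end
end

section
/- Let H be an infinite-dimensional separable complex Hilbert space and let A be a bounded linear operator on H. Suppose there exist a conjugation J on H with JAJ = A* and a cyclic vector x₀ of A with Jx₀ = x₀ such that Γ(x₀, Ax₀, …, Aⁿx₀, (A*)ⁿx₀) = 0 for every n ≥ 1. Then A belongs to the class C₊(H). -/
/-!
Write `Kₙ = span {x₀, A x₀, …, Aⁿ⁻¹ x₀}`. Since `x₀` is cyclic and `H` is infinite-dimensional,
no `Kₙ` (`n ≥ 1`) is `A`-invariant (it would be a closed dense proper subspace), so the orbit
`(Aᵏ x₀)` is linearly independent. The vanishing Gram determinants then say that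
`(A*)ⁿ x₀ ∈ Kₙ₊₁`, and as `J (Aᵏ x₀) = (A*)ᵏ x₀`, every `Kₙ` is `J`-invariant. Hence the
Gram–Schmidt basis `(fₙ)` of the orbit satisfies `J fₙ ∈ ℂ fₙ`, and a phase change gives an
orthonormal basis `(eₙ)` adapted to the flag `(Kₙ)` with `J eₙ = eₙ`. In it the matrix of `A` is
Hessenberg because `A Kₙ ⊆ Kₙ₊₁`, symmetric because `JAJ = A*` and `J` fixes the basis, hence
tridiagonal; a vanishing subdiagonal entry would make some `Kₙ` invariant under `A`.
-/

open scoped ComplexConjugate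

noncomputable section

variable {H : Type*} [NormedAddCommGroup H] [InnerProductSpace ℂ H]

open scoped InnerProductSpace InnerProduct

theorem span_image_Iio_add_one {R M : Type*} [Semiring R] [AddCommMonoid M] [Module R M]
    (v : ℕ → M) (n : ℕ) :
    Submodule.span R (v '' Set.Iio (n + 1)) = R ∙ v n ⊔ Submodule.span R (v '' Set.Iio n) := by
  rw [Set.Iio_add_one_eq_Iic, ← Set.Iio_insert, Set.image_insert_eq, Submodule.span_insert]

theorem span_image_smul_of_ne_zero {K V ι : Type*} [DivisionRing K] [AddCommGroup V] [Module K V]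
    {v : ι → V} {d : ι → K} (hd : ∀ i, d i ≠ 0) (s : Set ι) :
    Submodule.span K ((fun i => d i • v i) '' s) = Submodule.span K (v '' s) := by
  refine Submodule.span_eq_span ?_ ?_ <;> rintro _ ⟨i, hi, rfl⟩
  · exact Submodule.smul_mem _ _ (Submodule.subset_span ⟨i, hi, rfl⟩)
  · rw [← inv_smul_smul₀ (hd i) (v i)]
    exact Submodule.smul_mem _ _ (Submodule.subset_span ⟨i, hi, rfl⟩)

theorem linearIndependent_of_notMem_span_image_Iio {K V : Type*} [DivisionRing K]
    [AddCommGroup V] [Module K V] {v : ℕ → V}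
    (h : ∀ n, v n ∉ Submodule.span K (v '' Set.Iio n)) : LinearIndependent K v := by
  have hfin (n : ℕ) : LinearIndependent K fun i : Fin n => v i := by
    induction n with
    | zero => exact linearIndependent_empty_type
    | succ n ih =>
      rw [← Fin.snoc_init_self (fun i : Fin (n + 1) => v i), linearIndependent_finSnoc]
      have hrange : Set.range (Fin.init fun i : Fin (n + 1) => v i) = v '' Set.Iio n := by
        ext; simp [Fin.init, Fin.exists_iff]
      rw [Fin.val_last, hrange]
      exact ⟨ih, h n⟩
  rw [linearIndependent_iff_finset_linearIndependent]
  intro s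
  obtain ⟨N, hN⟩ : ∃ N, ∀ i ∈ s, i < N :=
    ⟨s.sup id + 1, fun i hi => Nat.lt_succ_of_le (Finset.le_sup (f := id) hi)⟩
  exact (hfin N).comp (fun i : s => (⟨i, hN i i.2⟩ : Fin N)) fun i j hij =>
    Subtype.ext (Fin.ext_iff.mp hij)

section Krylov

variable {R M : Type*} [Semiring R] [AddCommMonoid M] [Module R M]

def krylov (f : Module.End R M) (x : M) (n : ℕ) : Submodule R M :=
  Submodule.span R ((fun k => (f ^ k) x) '' Set.Iio n)

variable {f : Module.End R M} {x : M}

theorem pow_apply_mem_krylov {k n : ℕ} (h : k < n) : (f ^ k) x ∈ krylov f x n :=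
  Submodule.subset_span ⟨k, h, rfl⟩

theorem self_mem_krylov {n : ℕ} (hn : 0 < n) : x ∈ krylov f x n := by
  simpa using pow_apply_mem_krylov (f := f) (x := x) hn

theorem krylov_mono : Monotone (krylov f x) := fun _ _ h =>
  Submodule.span_mono (Set.image_mono (Set.Iio_subset_Iio h))

theorem krylov_succ (n : ℕ) : krylov f x (n + 1) = R ∙ (f ^ n) x ⊔ krylov f x n :=
  span_image_Iio_add_one _ n

theorem apply_mem_krylov_succ {n : ℕ} {y : M} (hy : y ∈ krylov f x n) :
    f y ∈ krylov f x (n + 1) := by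
  refine Submodule.map_span_le f _ _ |>.2 ?_ (Submodule.mem_map_of_mem hy)
  rintro _ ⟨k, hk, rfl⟩
  rw [← Module.End.mul_apply, ← pow_succ']
  exact pow_apply_mem_krylov (Nat.succ_lt_succ hk)

instance {K V : Type*} [DivisionRing K] [AddCommGroup V] [Module K V] (f : Module.End K V)
    (x : V) (n : ℕ) : FiniteDimensional K (krylov f x n) :=
  FiniteDimensional.span_of_finite K ((Set.finite_Iio n).image _)

end Krylov

theorem ContinuousLinearMap.toLinearMap_pow_apply {R M : Type*} [Semiring R] [TopologicalSpace M]
    [AddCommMonoid M] [Module R M] (A : M →L[R] M) (k : ℕ) (x : M) :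
    ((A : M →ₗ[R] M) ^ k) x = (A ^ k) x := by
  rw [← ContinuousLinearMap.toLinearMap_pow]
  rfl

namespace IsCyclicVector

variable {A : H →L[ℂ] H} {x : H}

theorem eq_top_of_invariant (hx : IsCyclicVector A x) {S : Submodule ℂ H}
    [FiniteDimensional ℂ S] (hxS : x ∈ S) (hS : ∀ y ∈ S, A y ∈ S) : S = ⊤ := by
  have hle : Submodule.span ℂ (Set.range fun k => (A ^ k) x) ≤ S := by
    refine Submodule.span_le.2 (Set.range_subset_iff.2 fun k => ?_)
    rw [SetLike.mem_coe, ← ContinuousLinearMap.toLinearMap_pow_apply]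
    exact Module.End.pow_apply_mem_of_forall_mem k hS x hxS
  rw [← Submodule.dense_iff_topologicalClosure_eq_top.1 (hx.mono hle),
    S.closed_of_finiteDimensional.submodule_topologicalClosure_eq]

theorem not_invariant_krylov (hx : IsCyclicVector A x) (hinf : ¬ FiniteDimensional ℂ H)
    (n : ℕ) :
    ¬ ∀ y ∈ krylov (A : H →ₗ[ℂ] H) x (n + 1), A y ∈ krylov (A : H →ₗ[ℂ] H) x (n + 1) := by
  intro hinv
  have htop := hx.eq_top_of_invariant (self_mem_krylov n.succ_pos) hinv
  have : FiniteDimensional ℂ (⊤ : Submodule ℂ H) := htop ▸ inferInstance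
  exact hinf Submodule.topEquiv.finiteDimensional

theorem pow_apply_notMem_krylov (hx : IsCyclicVector A x) (hinf : ¬ FiniteDimensional ℂ H)
    (n : ℕ) : (A ^ n) x ∉ krylov (A : H →ₗ[ℂ] H) x n := by
  intro hmem
  have heq : krylov (A : H →ₗ[ℂ] H) x (n + 1) = krylov (A : H →ₗ[ℂ] H) x n := by
    rw [krylov_succ, sup_eq_right, Submodule.span_singleton_le_iff_mem,
      ContinuousLinearMap.toLinearMap_pow_apply]
    exact hmem
  refine hx.not_invariant_krylov hinf n fun y hy => ?_
  rw [heq] at hy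
  exact apply_mem_krylov_succ hy

theorem linearIndependent (hx : IsCyclicVector A x) (hinf : ¬ FiniteDimensional ℂ H) :
    LinearIndependent ℂ fun k => (A ^ k) x := by
  refine linearIndependent_of_notMem_span_image_Iio fun n => ?_
  simpa only [krylov, ContinuousLinearMap.toLinearMap_pow_apply] using
    hx.pow_apply_notMem_krylov hinf n

end IsCyclicVector

theorem mem_span_of_gramDet_snoc_eq_zero {n : ℕ} {y : Fin n → H} (hy : LinearIndependent ℂ y)
    {z : H} (h : gramDet (Fin.snoc y z : Fin (n + 1) → H) = 0) :
    z ∈ Submodule.span ℂ (Set.range y) := by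
  by_contra hz
  exact (gramDet_eq_zero_iff _).1 h (linearIndependent_finSnoc.2 ⟨hy, hz⟩)

theorem GammaVanish.adjoint_pow_apply_mem_krylov [CompleteSpace H] {A : H →L[ℂ] H} {x : H}
    (hΓ : GammaVanish A x) (hind : LinearIndependent ℂ fun k => (A ^ k) x) (n : ℕ) :
    (A† ^ n) x ∈ krylov (A : H →ₗ[ℂ] H) x (n + 1) := by
  rcases Nat.eq_zero_or_pos n with rfl | hn
  · simpa using self_mem_krylov (f := (A : H →ₗ[ℂ] H)) (x := x) Nat.one_pos
  refine Submodule.span_le.2 (Set.range_subset_iff.2 fun i => ?_)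
    (mem_span_of_gramDet_snoc_eq_zero (hind.comp _ Fin.val_injective) (hΓ n hn))
  rw [SetLike.mem_coe, Function.comp_apply, ← ContinuousLinearMap.toLinearMap_pow_apply]
  exact pow_apply_mem_krylov i.2

section Orthonormal

variable {𝕜 E : Type*} [RCLike 𝕜] [NormedAddCommGroup E] [InnerProductSpace 𝕜 E]

theorem Submodule.IsOrtho.sup_inf_orthogonal {U V : Submodule 𝕜 E} (h : U ⟂ V) :
    (U ⊔ V) ⊓ Vᗮ = U := by
  rw [sup_inf_assoc_of_le V h, V.inf_orthogonal_eq_bot, sup_bot_eq]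

theorem Orthonormal.inner_eq_zero_of_mem_span {ι : Type*} {v : ι → E} (hv : Orthonormal 𝕜 v)
    {s : Set ι} {k : ι} (hk : k ∉ s) {y : E} (hy : y ∈ Submodule.span 𝕜 (v '' s)) :
    ⟪v k, y⟫_𝕜 = 0 := by
  refine Submodule.mem_orthogonal_singleton_iff_inner_right.1 (Submodule.span_le.2 ?_ hy)
  rintro _ ⟨i, hi, rfl⟩
  exact Submodule.mem_orthogonal_singleton_iff_inner_right.2
    (hv.2 (ne_of_mem_of_not_mem hi hk).symm)

theorem Orthonormal.isOrtho_span_Iio {v : ℕ → E} (hv : Orthonormal 𝕜 v) (n : ℕ) :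
    (𝕜 ∙ v n) ⟂ Submodule.span 𝕜 (v '' Set.Iio n) := by
  refine Submodule.isOrtho_span.2 ?_
  rintro _ rfl _ ⟨i, hi, rfl⟩
  exact hv.2 (ne_of_gt hi)

theorem Orthonormal.smul_of_norm_eq_one {ι : Type*} {v : ι → E} (hv : Orthonormal 𝕜 v)
    {d : ι → 𝕜} (hd : ∀ i, ‖d i‖ = 1) : Orthonormal 𝕜 fun i => d i • v i := by
  refine ⟨fun i => by rw [norm_smul, hd, hv.1, mul_one], fun i j hij => ?_⟩
  dsimp only
  rw [inner_smul_left, inner_smul_right, hv.2 hij, mul_zero, mul_zero]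

end Orthonormal

theorem exists_norm_eq_one_smul_fixed {E : Type*} [AddCommGroup E] [Module ℂ E]
    (T : E →ₗ⋆[ℂ] E) {u : E} {c : ℂ} (hc : ‖c‖ = 1) (hu : T u = c • u) :
    ∃ d : ℂ, ‖d‖ = 1 ∧ T (d • u) = d • u := by
  -- a square root `d` of `c` works: `T (d • u) = (conj d * d ^ 2) • u = (‖d‖ ^ 2 * d) • u`
  obtain ⟨d, hd⟩ := IsAlgClosed.exists_pow_nat_eq c two_pos
  have hnorm : ‖d‖ = 1 :=
    (pow_eq_one_iff_of_nonneg (norm_nonneg d) two_ne_zero).1 (by rw [← norm_pow, hd, hc])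
  refine ⟨d, hnorm, ?_⟩
  rw [LinearMap.map_smulₛₗ, hu, smul_smul, ← hd, pow_two, ← mul_assoc, Complex.conj_mul', hnorm]
  simp

namespace IsConjugation

variable {J : H → H}

def toSemilinearMap (hJ : IsConjugation J) : H →ₗ⋆[ℂ] H where
  toFun := J
  map_add' := hJ.1
  map_smul' := hJ.2.1

theorem inner_map_map (hJ : IsConjugation J) (x y : H) : ⟪J x, J y⟫_ℂ = ⟪y, x⟫_ℂ :=
  hJ.2.2.2 x y

theorem inner_map_right (hJ : IsConjugation J) (x y : H) : ⟪x, J y⟫_ℂ = ⟪y, J x⟫_ℂ := by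
  rw [← hJ.inner_map_map, hJ.2.2.1]

theorem norm_map (hJ : IsConjugation J) (x : H) : ‖J x‖ = ‖x‖ := by
  rw [norm_eq_sqrt_re_inner (𝕜 := ℂ), norm_eq_sqrt_re_inner (𝕜 := ℂ), hJ.inner_map_map]

variable {A B : H →L[ℂ] H}

theorem map_apply_of_conj_eq (hJ : IsConjugation J) (h : ∀ x, J (A (J x)) = B x) (x : H) :
    J (A x) = B (J x) := by
  rw [← h, hJ.2.2.1]

theorem map_pow_apply_of_conj_eq (hJ : IsConjugation J) (h : ∀ x, J (A (J x)) = B x) (n : ℕ)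
    (x : H) : J ((A ^ n) x) = (B ^ n) (J x) := by
  induction n with
  | zero => rfl
  | succ n ih =>
    rw [pow_succ', pow_succ', mul_apply_eq_comp, mul_apply_eq_comp, hJ.map_apply_of_conj_eq h, ih]

theorem inner_apply_comm [CompleteSpace H] (hJ : IsConjugation J) (h : ∀ x, J (A (J x)) = (A†) x)
    {u v : H} (hu : J u = u) (hv : J v = v) : ⟪u, A v⟫_ℂ = ⟪v, A u⟫_ℂ :=
  calc ⟪u, A v⟫_ℂ = ⟪J (A (J v)), J u⟫_ℂ := by rw [hJ.inner_map_map, hv]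
    _ = ⟪v, A u⟫_ℂ := by rw [h, hu, ContinuousLinearMap.adjoint_inner_left]

theorem mapsTo_krylov [CompleteSpace H] (hJ : IsConjugation J) (h : ∀ y, J (A (J y)) = (A†) y)
    {x : H} (hx : J x = x) (hadj : ∀ k, (A† ^ k) x ∈ krylov (A : H →ₗ[ℂ] H) x (k + 1))
    (n : ℕ) : ∀ y ∈ krylov (A : H →ₗ[ℂ] H) x n, J y ∈ krylov (A : H →ₗ[ℂ] H) x n := by
  intro y hy
  refine Submodule.map_span_le hJ.toSemilinearMap _ _ |>.2 ?_ (Submodule.mem_map_of_mem hy)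
  rintro _ ⟨k, hk, rfl⟩
  dsimp only
  rw [ContinuousLinearMap.toLinearMap_pow_apply]
  change J ((A ^ k) x) ∈ _
  rw [hJ.map_pow_apply_of_conj_eq h, hx]
  exact krylov_mono (Nat.succ_le_of_lt hk) (hadj k)

theorem exists_orthonormal_fixed (hJ : IsConjugation J) {f : ℕ → H} (hf : Orthonormal ℂ f)
    (hJf : ∀ n, ∀ y ∈ Submodule.span ℂ (f '' Set.Iio n),
      J y ∈ Submodule.span ℂ (f '' Set.Iio n)) :
    ∃ e : ℕ → H, Orthonormal ℂ e ∧ (∀ n, J (e n) = e n) ∧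
      ∀ n, Submodule.span ℂ (e '' Set.Iio n) = Submodule.span ℂ (f '' Set.Iio n) := by
  have hline (n : ℕ) : ∃ c : ℂ, ‖c‖ = 1 ∧ J (f n) = c • f n := by
    have hmem : J (f n) ∈ (ℂ ∙ f n ⊔ Submodule.span ℂ (f '' Set.Iio n)) ⊓
        (Submodule.span ℂ (f '' Set.Iio n))ᗮ := by
      refine Submodule.mem_inf.2 ⟨?_, (Submodule.mem_orthogonal _ _).2 fun y hy => ?_⟩
      · rw [← span_image_Iio_add_one]
        exact hJf (n + 1) _ (Submodule.subset_span ⟨n, lt_add_one n, rfl⟩)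
      · rw [hJ.inner_map_right]
        exact hf.inner_eq_zero_of_mem_span Set.self_notMem_Iio (hJf n y hy)
    rw [(hf.isOrtho_span_Iio n).sup_inf_orthogonal] at hmem
    obtain ⟨c, hc⟩ := Submodule.mem_span_singleton.1 hmem
    refine ⟨c, ?_, hc.symm⟩
    rw [← mul_one ‖c‖, ← hf.1 n, ← norm_smul, hc, hJ.norm_map, hf.1 n]
  choose c hc hJc using hline
  choose d hd hJd using fun n => exists_norm_eq_one_smul_fixed hJ.toSemilinearMap (hc n) (hJc n)
  refine ⟨fun n => d n • f n, hf.smul_of_norm_eq_one hd, hJd, fun n => ?_⟩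
  exact span_image_smul_of_ne_zero (fun i => norm_ne_zero_iff.1 (by rw [hd i]; exact one_ne_zero)) _

end IsConjugation

section KrylovBasis

variable {A : H →L[ℂ] H} {x : H} {e : ℕ → H}

theorem IsCyclicVector.dense_span_of_span_eq_krylov (hx : IsCyclicVector A x)
    (hspan : ∀ n, Submodule.span ℂ (e '' Set.Iio n) = krylov (A : H →ₗ[ℂ] H) x n) :
    Dense (Submodule.span ℂ (Set.range e) : Set H) := by
  refine hx.mono (Submodule.span_le.2 (Set.range_subset_iff.2 fun k => ?_))
  have : (A ^ k) x ∈ Submodule.span ℂ (e '' Set.Iio (k + 1)) := by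
    rw [hspan, ← ContinuousLinearMap.toLinearMap_pow_apply]
    exact pow_apply_mem_krylov (lt_add_one k)
  exact Submodule.span_mono (Set.image_subset_range _ _) this

theorem apply_mem_span_Iio_add_two
    (hspan : ∀ n, Submodule.span ℂ (e '' Set.Iio n) = krylov (A : H →ₗ[ℂ] H) x n) (l : ℕ) :
    A (e l) ∈ Submodule.span ℂ (e '' Set.Iio (l + 2)) := by
  rw [hspan]
  exact apply_mem_krylov_succ (hspan (l + 1) ▸ Submodule.subset_span ⟨l, lt_add_one l, rfl⟩)

theorem inner_apply_eq_zero_of_add_one_lt (he : Orthonormal ℂ e)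
    (hspan : ∀ n, Submodule.span ℂ (e '' Set.Iio n) = krylov (A : H →ₗ[ℂ] H) x n) {k l : ℕ}
    (h : l + 1 < k) : ⟪e k, A (e l)⟫_ℂ = 0 :=
  he.inner_eq_zero_of_mem_span (Set.notMem_Iio.2 (by omega)) (apply_mem_span_Iio_add_two hspan l)

theorem inner_apply_add_one_ne_zero (he : Orthonormal ℂ e)
    (hspan : ∀ n, Submodule.span ℂ (e '' Set.Iio n) = krylov (A : H →ₗ[ℂ] H) x n)
    (hx : IsCyclicVector A x) (hinf : ¬ FiniteDimensional ℂ H) (l : ℕ) :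
    ⟪e (l + 1), A (e l)⟫_ℂ ≠ 0 := by
  intro h
  have hAe : A (e l) ∈ krylov (A : H →ₗ[ℂ] H) x (l + 1) := by
    rw [← hspan, ← (he.isOrtho_span_Iio (l + 1)).symm.sup_inf_orthogonal, sup_comm,
      ← span_image_Iio_add_one]
    exact ⟨apply_mem_span_Iio_add_two hspan l,
      Submodule.mem_orthogonal_singleton_iff_inner_right.2 h⟩
  refine hx.not_invariant_krylov hinf l fun y hy => ?_
  rw [← hspan, span_image_Iio_add_one, hspan] at hy
  obtain ⟨_, ha, z, hz, rfl⟩ := Submodule.mem_sup.1 hy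
  obtain ⟨t, rfl⟩ := Submodule.mem_span_singleton.1 ha
  rw [map_add, map_smul]
  exact add_mem (Submodule.smul_mem _ t hAe) (apply_mem_krylov_succ hz)

theorem memM3plus_inner_apply [CompleteSpace H] {J : H → H} (hJ : IsConjugation J)
    (hJA : ∀ y, J (A (J y)) = (A†) y) (he : Orthonormal ℂ e) (hJe : ∀ n, J (e n) = e n)
    (hspan : ∀ n, Submodule.span ℂ (e '' Set.Iio n) = krylov (A : H →ₗ[ℂ] H) x n)
    (hx : IsCyclicVector A x) (hinf : ¬ FiniteDimensional ℂ H) :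
    MemM3plus fun k l => ⟪e k, A (e l)⟫_ℂ := by
  have hsymm (k l : ℕ) : ⟪e k, A (e l)⟫_ℂ = ⟪e l, A (e k)⟫_ℂ :=
    hJ.inner_apply_comm hJA (hJe k) (hJe l)
  refine ⟨fun k l hkl => ?_, hsymm, fun l => ?_⟩ <;> dsimp only
  · rcases lt_abs.1 hkl with h | h
    · exact inner_apply_eq_zero_of_add_one_lt he hspan (by omega)
    · rw [hsymm]
      exact inner_apply_eq_zero_of_add_one_lt he hspan (by omega)
  · rw [hsymm]
    exact inner_apply_add_one_ne_zero he hspan hx hinf l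

end KrylovBasis

theorem statement1_general {H : Type*} [NormedAddCommGroup H] [InnerProductSpace ℂ H]
    [CompleteSpace H]
    (hinf : ¬ FiniteDimensional ℂ H)
    (A : H →L[ℂ] H) (J : H → H) (x₀ : H)
    (hJ : IsConjugation J)
    (hJAJ : ∀ x : H, J (A (J x)) = ContinuousLinearMap.adjoint A x)
    (hcyc : IsCyclicVector A x₀) (hJx₀ : J x₀ = x₀)
    (hΓ : GammaVanish A x₀) :
    MemCplus A := by
  have hind := hcyc.linearIndependent hinf
  have hspan_gs (n : ℕ) : Submodule.span ℂ
      (InnerProductSpace.gramSchmidtNormed ℂ (fun k => (A ^ k) x₀) '' Set.Iio n) =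
        krylov (A : H →ₗ[ℂ] H) x₀ n := by
    rw [InnerProductSpace.span_gramSchmidtNormed, InnerProductSpace.span_gramSchmidt_Iio, krylov]
    simp only [ContinuousLinearMap.toLinearMap_pow_apply]
  obtain ⟨e, he, hJe, hspan_e⟩ :=
    hJ.exists_orthonormal_fixed (InnerProductSpace.gramSchmidtNormed_orthonormal hind) fun n => by
      rw [hspan_gs]
      exact hJ.mapsTo_krylov hJAJ hJx₀ (hΓ.adjoint_pow_apply_mem_krylov hind) n
  have hspan (n : ℕ) := (hspan_e n).trans (hspan_gs n)
  have hdense := hcyc.dense_span_of_span_eq_krylov hspan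
  refine ⟨HilbertBasis.mk he (Submodule.dense_iff_topologicalClosure_eq_top.1 hdense).ge, ?_⟩
  unfold matrixIn
  rw [HilbertBasis.coe_mk]
  exact memM3plus_inner_apply hJ hJAJ he hJe hspan hcyc hinf

/-- If there are a conjugation `J` with `JAJ = A*` and a cyclic vector `x₀`
with `Jx₀ = x₀` such that `Γ(x₀, Ax₀, …, Aⁿx₀, (A*)ⁿx₀) = 0` for all `n ≥ 1`,
then `A ∈ C₊(H)`. -/
theorem statement1 {H : Type*} [NormedAddCommGroup H] [InnerProductSpace ℂ H]
    [CompleteSpace H] [TopologicalSpace.SeparableSpace H]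
    (hinf : ¬ FiniteDimensional ℂ H)
    (A : H →L[ℂ] H) (J : H → H) (x₀ : H)
    (hJ : IsConjugation J)
    (hJAJ : ∀ x : H, J (A (J x)) = ContinuousLinearMap.adjoint A x)
    (hcyc : IsCyclicVector A x₀) (hJx₀ : J x₀ = x₀)
    (hΓ : GammaVanish A x₀) :
    MemCplus A :=
  statement1_general hinf A J x₀ hJ hJAJ hcyc hJx₀ hΓ
end
end

section
/- Let H be an infinite-dimensional separable complex Hilbert space and let A be a unitary operator on H. Then A does not belong to the class C₊(H); i.e., there is no orthonormal basis of H in which the matrix of A belongs to M₃⁺. -/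
/-!
An isometry maps the orthogonal vectors `e₀, e₂` to orthogonal vectors, so columns `0` and `2` of
its matrix are orthogonal in `ℓ²`. In a tridiagonal matrix these two columns overlap only in row
`1`, where the entries are `m₁₀ = m₀₁ ≠ 0` and `m₁₂ ≠ 0` for a matrix in `M₃⁺`.
-/

open scoped ComplexConjugate

noncomputable section

variable {H : Type*} [NormedAddCommGroup H] [InnerProductSpace ℂ H]

theorem MemM3plus.tsum_conj_mul_ne_zero {m : ℕ → ℕ → ℂ} (hm : MemM3plus m) (l : ℕ) :
    ∑' k, conj (m k l) * m k (l + 2) ≠ 0 := by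
  obtain ⟨hband, hsymm, hsuper⟩ := hm
  have hvanish : ∀ k ≠ l + 1, conj (m k l) * m k (l + 2) = 0 := by
    intro k hk
    rcases le_or_gt k l with hkl | hkl
    · rw [hband k (l + 2) (by rw [lt_abs]; omega), mul_zero]
    · rw [hband k l (by rw [lt_abs]; omega), map_zero, zero_mul]
  rw [tsum_eq_single (l + 1) hvanish, hsymm (l + 1) l]
  exact mul_ne_zero ((map_ne_zero _).2 (hsuper l)) (hsuper (l + 1))

theorem inner_map_map_eq_tsum_matrixIn (A : H →L[ℂ] H) (e : HilbertBasis ℕ ℂ H) (l l' : ℕ) :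
    inner ℂ (A (e l)) (A (e l')) = ∑' k, conj (matrixIn A e k l) * matrixIn A e k l' := by
  rw [← e.tsum_inner_mul_inner]
  simp only [matrixIn, inner_conj_symm]

theorem statement7_general {H : Type*} [NormedAddCommGroup H] [InnerProductSpace ℂ H]
    [CompleteSpace H]
    (A : H →L[ℂ] H)
    (hA : ContinuousLinearMap.adjoint A ∘L A = 1 ∧ A ∘L ContinuousLinearMap.adjoint A = 1) :
    ¬ MemCplus A := by
  rintro ⟨e, he⟩
  have hiso := A.inner_map_map_iff_adjoint_comp_self.mpr hA.1
  apply he.tsum_conj_mul_ne_zero 0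
  rw [← inner_map_map_eq_tsum_matrixIn, hiso]
  exact e.orthonormal.2 (by decide)

/-- No unitary operator on an infinite-dimensional separable complex
Hilbert space belongs to the class `C₊(H)`. -/
theorem statement7 {H : Type*} [NormedAddCommGroup H] [InnerProductSpace ℂ H]
    [CompleteSpace H] [TopologicalSpace.SeparableSpace H]
    (hinf : ¬ FiniteDimensional ℂ H)
    (A : H →L[ℂ] H)
    (hA : ContinuousLinearMap.adjoint A ∘L A = 1 ∧ A ∘L ContinuousLinearMap.adjoint A = 1) :
    ¬ MemCplus A :=
  statement7_general A hA
end
end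

section
/- Let A be a unitary operator on an infinite-dimensional separable complex Hilbert space H, and let (e_k)_{k≥0} be an orthonormal basis of H such that (Ae_l, e_k) = 0 whenever |k−l| > 1. Then (Ae₁, e₀) · conj((Ae₁, e₂)) = 0; i.e., at least one of the off-diagonal entries m_{0,1} = (Ae₁, e₀) and m_{2,1} = (Ae₁, e₂) vanishes. -/
open scoped ComplexConjugate

noncomputable section

variable {H : Type*} [NormedAddCommGroup H] [InnerProductSpace ℂ H]

/-!
Since `A A* = 1`, the rows of the matrix of `A` are orthonormal in `ℓ²`; in particular rows `0`
and `2` are orthogonal. For a tridiagonal matrix these two rows overlap only in column `1`, so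
`m₀₁ · conj m₂₁ = 0`.
-/

section

variable {𝕜 E ι : Type*} [RCLike 𝕜] [NormedAddCommGroup E] [InnerProductSpace 𝕜 E]
  [CompleteSpace E]

theorem ContinuousLinearMap.inner_adjoint_adjoint_of_comp_adjoint_eq_one {A : E →L[𝕜] E}
    (hA : A ∘L ContinuousLinearMap.adjoint A = 1) (x y : E) :
    inner 𝕜 (ContinuousLinearMap.adjoint A x) (ContinuousLinearMap.adjoint A y) =
      inner 𝕜 x y := by
  rw [ContinuousLinearMap.adjoint_inner_right, ← ContinuousLinearMap.comp_apply, hA]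
  rfl

theorem HilbertBasis.hasSum_inner_mul_conj_inner_of_comp_adjoint_eq_one (e : HilbertBasis ι 𝕜 E)
    {A : E →L[𝕜] E} (hA : A ∘L ContinuousLinearMap.adjoint A = 1) (x y : E) :
    HasSum (fun k => inner 𝕜 x (A (e k)) * conj (inner 𝕜 y (A (e k)))) (inner 𝕜 x y) := by
  have := e.hasSum_inner_mul_inner (ContinuousLinearMap.adjoint A x)
    (ContinuousLinearMap.adjoint A y)
  simpa only [ContinuousLinearMap.adjoint_inner_left, ContinuousLinearMap.adjoint_inner_right,
    inner_conj_symm, ContinuousLinearMap.inner_adjoint_adjoint_of_comp_adjoint_eq_one hA]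
    using this

end

theorem statement8_general {H : Type*} [NormedAddCommGroup H] [InnerProductSpace ℂ H]
    [CompleteSpace H]
    (A : H →L[ℂ] H)
    (hA : ContinuousLinearMap.adjoint A ∘L A = 1 ∧ A ∘L ContinuousLinearMap.adjoint A = 1)
    (e : HilbertBasis ℕ ℂ H)
    (htri : ∀ k l : ℕ, 1 < |(k : ℤ) - (l : ℤ)| → (inner ℂ (e k) (A (e l)) : ℂ) = 0) :
    (inner ℂ (e 0) (A (e 1)) : ℂ) * conj ((inner ℂ (e 2) (A (e 1)) : ℂ)) = 0 := by
  have hrows := e.hasSum_inner_mul_conj_inner_of_comp_adjoint_eq_one hA.2 (e 0) (e 2)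
  rw [e.orthonormal.inner_eq_zero (by decide)] at hrows
  have hoff : ∀ k, k ≠ 1 →
      (inner ℂ (e 0) (A (e k)) : ℂ) * conj (inner ℂ (e 2) (A (e k))) = 0 := by
    rintro (_ | _ | k) hk
    · rw [htri 2 0 (by norm_num), map_zero (starRingEnd ℂ), mul_zero]
    · exact absurd rfl hk
    · rw [htri 0 (k + 2) (by push_cast; rw [abs_of_neg (by linarith)]; linarith), zero_mul]
  exact (hasSum_single 1 hoff).unique hrows

/-- If a unitary operator `A` has a tridiagonal matrix in an orthonormal
basis `(e_k)`, then `(Ae₁, e₀) · conj((Ae₁, e₂)) = 0` (paper's inner product is linear in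
the first argument, so `(Ae₁, e₀) = ⟪e₀, Ae₁⟫` in Mathlib's convention). -/
theorem statement8 {H : Type*} [NormedAddCommGroup H] [InnerProductSpace ℂ H]
    [CompleteSpace H] [TopologicalSpace.SeparableSpace H]
    (hinf : ¬ FiniteDimensional ℂ H)
    (A : H →L[ℂ] H)
    (hA : ContinuousLinearMap.adjoint A ∘L A = 1 ∧ A ∘L ContinuousLinearMap.adjoint A = 1)
    (e : HilbertBasis ℕ ℂ H)
    (htri : ∀ k l : ℕ, 1 < |(k : ℤ) - (l : ℤ)| → (inner ℂ (e k) (A (e l)) : ℂ) = 0) :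
    (inner ℂ (e 0) (A (e 1)) : ℂ) * conj ((inner ℂ (e 2) (A (e 1)) : ℂ)) = 0 :=
  statement8_general A hA e htri
end
end

section
/- Let A be a bounded linear operator on a complex Hilbert space H, let J be a conjugation on H with JAJ = A*, and let (e_k)_{k≥0} be an orthonormal basis of H with Je_k = e_k and Ae_k ∈ span{e₀, …, e_{k+1}} for all k. Then the matrix of A is tridiagonal: (Ae_l, e_k) = 0 whenever |k − l| > 1. -/
/-!
The hypothesis `Ae_l ∈ span{e₀, …, e_{l+1}}` kills the entries below the subdiagonal.
Since `J` fixes the basis, `JAJ = A*` makes the matrix symmetric, `(Ae_l, e_k) = (Ae_k, e_l)`,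
which transfers this to the entries above the superdiagonal.
-/

open scoped ComplexConjugate

noncomputable section

variable {H : Type*} [NormedAddCommGroup H] [InnerProductSpace ℂ H]

open scoped InnerProductSpace

theorem Orthonormal.inner_eq_zero_of_mem_span_s16 {𝕜 E ι κ : Type*} [RCLike 𝕜]
    [NormedAddCommGroup E] [InnerProductSpace 𝕜 E] {v : ι → E} (hv : Orthonormal 𝕜 v)
    {f : κ → ι} {i : ι} (hi : i ∉ Set.range f) {x : E}
    (hx : x ∈ Submodule.span 𝕜 (Set.range fun j => v (f j))) : ⟪v i, x⟫_𝕜 = 0 := by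
  have hspan : Submodule.span 𝕜 (Set.range fun j => v (f j)) ≤
      LinearMap.ker (innerSL 𝕜 (v i)).toLinearMap := by
    rw [Submodule.span_le]
    rintro _ ⟨j, rfl⟩
    exact hv.inner_eq_zero fun h => hi ⟨j, h.symm⟩
  simpa using hspan hx

theorem IsConjugation.inner_apply_comm_s16 [CompleteSpace H] {J : H → H} (hJ : IsConjugation J)
    {A : H →L[ℂ] H} (hJAJ : ∀ x : H, J (A (J x)) = ContinuousLinearMap.adjoint A x)
    {x y : H} (hx : J x = x) (hy : J y = y) : ⟪x, A y⟫_ℂ = ⟪y, A x⟫_ℂ :=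
  calc ⟪x, A y⟫_ℂ = ⟪ContinuousLinearMap.adjoint A x, y⟫_ℂ :=
        (ContinuousLinearMap.adjoint_inner_left A y x).symm
    _ = ⟪J (A x), J y⟫_ℂ := by rw [← hJAJ, hx, hy]
    _ = ⟪y, A x⟫_ℂ := hJ.2.2.2 _ _

/-- If `JAJ = A*` for a conjugation `J` fixing each vector of an
orthonormal basis `(e_k)`, and `Ae_k ∈ span{e₀,…,e_{k+1}}` for all `k`, then the matrix
of `A` is tridiagonal: `(Ae_l, e_k) = 0` whenever `|k − l| > 1`. -/
theorem statement16 {H : Type*} [NormedAddCommGroup H] [InnerProductSpace ℂ H]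
    [CompleteSpace H]
    (A : H →L[ℂ] H) (J : H → H) (hJ : IsConjugation J)
    (hJAJ : ∀ x : H, J (A (J x)) = ContinuousLinearMap.adjoint A x)
    (e : HilbertBasis ℕ ℂ H) (hfix : ∀ k : ℕ, J (e k) = e k)
    (hA : ∀ k : ℕ, A (e k) ∈ Submodule.span ℂ
      (Set.range fun j : Fin (k + 2) => e (j : ℕ))) :
    ∀ k l : ℕ, 1 < |(k : ℤ) - (l : ℤ)| → (inner ℂ (e k) (A (e l)) : ℂ) = 0 := by
  intro k l hkl
  rcases lt_abs.mp hkl with hbelow | habove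
  · exact e.orthonormal.inner_eq_zero_of_mem_span_s16 (fun ⟨j, hj⟩ => by omega) (hA l)
  · rw [hJ.inner_apply_comm_s16 hJAJ (hfix k) (hfix l)]
    exact e.orthonormal.inner_eq_zero_of_mem_span_s16 (fun ⟨j, hj⟩ => by omega) (hA k)
end
end
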